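/- arXiv:gr-qc/0203017 — 3 statements merged into one kernel-verified Lean document; each statement's English description precedes it below -/
import Mathlib

section
/- A necessary and sufficient condition for the projected antisymmetric form to vanish, h_u(k_a)h_u = 0, is that k_a = (1/e)·{u ⊗ (g(u))(k_a) − (g(u))(k_a) ⊗ u}, i.e. in components k_a^{ij} = (1/e)·g_{mn}·u^n·(u^i·k_a^{mj} − u^j·k_a^{mi}); here the key fact is (g(u))(k_a)(g(u)) = g_{im}u^m·k_a^{ij}·g_{jn}u^n = 0 by antisymmetry of k_a. -/
/-!
Write `w = g(u)` and `P = 1 - (1/e) u ⊗ w`. Then `h_u = g P = Pᵀ g` (the second equality by symmetry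
of `g`), so `h_u k_a h_u = g (P k_a Pᵀ) g`, which vanishes iff `P k_a Pᵀ` does because `g` is
invertible. Expanding, `P k_a Pᵀ = k_a - (1/e)(u ⊗ w k_a - w k_a ⊗ u)`: the term quadratic in `1/e`
carries the factor `w k_a w`, which is zero by antisymmetry.
-/

open Finset Matrix

variable {ι R : Type*} [Fintype ι] [CommRing R]

lemma Matrix.dotProduct_mulVec_self_eq_zero_of_transpose_eq_neg [IsAddTorsionFree R]
    {K : Matrix ι ι R} (hK : Kᵀ = -K) (w : ι → R) : w ⬝ᵥ K *ᵥ w = 0 := by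
  refine self_eq_neg.mp ?_
  calc w ⬝ᵥ K *ᵥ w = w ⬝ᵥ Kᵀ *ᵥ w := by
        rw [mulVec_transpose, dotProduct_comm w (w ᵥ* K), dotProduct_mulVec]
    _ = -(w ⬝ᵥ K *ᵥ w) := by rw [hK, neg_mulVec, dotProduct_neg]

lemma Matrix.mul_mul_apply_eq_sum_sum {α : Type*} [NonUnitalNonAssocSemiring α]
    (A B C : Matrix ι ι α) (i j : ι) :
    (A * B * C) i j = ∑ m, ∑ p, A i m * B m p * C p j := by
  simp only [mul_apply, sum_mul]
  exact sum_comm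

lemma Matrix.sum_mul_sub_eq_vecMulVec_sub_vecMulVec_apply (K : Matrix ι ι R) (u w : ι → R)
    (i j : ι) :
    ∑ m, w m * (u i * K m j - u j * K m i)
      = (vecMulVec u (w ᵥ* K) - vecMulVec (w ᵥ* K) u) i j := by
  simp only [Matrix.sub_apply, vecMulVec_apply, vecMul, dotProduct, mul_sum, sum_mul,
    ← sum_sub_distrib]
  exact sum_congr rfl fun m _ => by ring

variable [DecidableEq ι]

lemma Matrix.one_sub_vecMulVec_mul_mul_one_sub_vecMulVec [IsAddTorsionFree R]
    {K : Matrix ι ι R} (hK : Kᵀ = -K) (c : R) (u w : ι → R) :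
    (1 - c • vecMulVec u w) * K * (1 - c • vecMulVec w u)
      = K - c • (vecMulVec u (w ᵥ* K) - vecMulVec (w ᵥ* K) u) := by
  have hKw : K * vecMulVec w u = -vecMulVec (w ᵥ* K) u := by
    rw [mul_vecMulVec, ← mulVec_transpose, hK, neg_mulVec, neg_vecMulVec, neg_neg]
  have hwKw : vecMulVec u (w ᵥ* K) * vecMulVec w u = 0 := by
    rw [vecMulVec_mul_vecMulVec, ← dotProduct_mulVec,
      dotProduct_mulVec_self_eq_zero_of_transpose_eq_neg hK, zero_smul, vecMulVec_zero]
  simp only [sub_mul, mul_sub, one_mul, mul_one, Matrix.smul_mul, Matrix.mul_smul, vecMulVec_mul,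
    hKw, hwKw]
  module

lemma Matrix.mul_mul_eq_zero_iff_of_mul_eq_one {G G' M : Matrix ι ι R} (hG : G * G' = 1) :
    G * M * G = 0 ↔ M = 0 := by
  refine ⟨fun h => ?_, fun h => by rw [h, mul_zero, zero_mul]⟩
  have hG' : G' * G = 1 := mul_eq_one_comm.mp hG
  calc M = G' * (G * M * G) * G' := by
        simp only [← mul_assoc, hG', one_mul]; rw [mul_assoc, hG, mul_one]
    _ = 0 := by rw [h, mul_zero, zero_mul]

theorem Matrix.sub_vecMulVec_mul_mul_sub_vecMulVec_eq_zero_iff [IsAddTorsionFree R]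
    {G G' K : Matrix ι ι R} (hG : G.IsSymm) (hGG' : G * G' = 1) (hK : Kᵀ = -K)
    (c : R) (u : ι → R) :
    (G - c • vecMulVec (G *ᵥ u) (G *ᵥ u)) * K * (G - c • vecMulVec (G *ᵥ u) (G *ᵥ u)) = 0 ↔
      K = c • (vecMulVec u ((G *ᵥ u) ᵥ* K) - vecMulVec ((G *ᵥ u) ᵥ* K) u) := by
  set w := G *ᵥ u
  have hleft : G - c • vecMulVec w w = G * (1 - c • vecMulVec u w) := by
    rw [mul_sub, mul_one, Matrix.mul_smul, mul_vecMulVec]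
  have hright : G - c • vecMulVec w w = (1 - c • vecMulVec w u) * G := by
    rw [sub_mul, one_mul, Matrix.smul_mul, vecMulVec_mul, ← mulVec_transpose, hG.eq]
  have hconj : (G - c • vecMulVec w w) * K * (G - c • vecMulVec w w)
      = G * ((1 - c • vecMulVec u w) * K * (1 - c • vecMulVec w u)) * G := by
    calc _ = G * (1 - c • vecMulVec u w) * K * ((1 - c • vecMulVec w u) * G) := by
          rw [← hleft, ← hright]
      _ = _ := by simp only [mul_assoc]
  rw [hconj, mul_mul_eq_zero_iff_of_mul_eq_one hGG',
    one_sub_vecMulVec_mul_mul_one_sub_vecMulVec hK, sub_eq_zero]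

theorem stmt13_general (n : ℕ) (glow ginv : Fin n → Fin n → ℝ) (u : Fin n → ℝ)
    (hsym : ∀ i j, glow i j = glow j i)
    (hinv : ∀ i m, ∑ j, glow i j * ginv j m = if i = m then (1:ℝ) else 0)
    (e : ℝ)
    (ka : Fin n → Fin n → ℝ) (hka : ∀ i j, ka i j = - ka j i)
    (hu : Fin n → Fin n → ℝ)
    (hhu : ∀ i j, hu i j = glow i j -
        (1/e) * (∑ m, glow i m * u m) * (∑ m, glow j m * u m)) :
    (∀ i j, ∑ m, ∑ p, hu i m * ka m p * hu p j = 0) ↔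
    (∀ i j, ka i j =
        (1/e) * ∑ m, (∑ p, glow m p * u p) * (u i * ka m j - u j * ka m i)) := by
  set G := Matrix.of glow
  have hG : G.IsSymm := IsSymm.ext fun i j => hsym j i
  have hGG' : G * Matrix.of ginv = 1 := by
    ext i m; simp [G, mul_apply, hinv, one_apply]
  have hK : (Matrix.of ka)ᵀ = -Matrix.of ka := by
    ext i j; simp [hka j i]
  have hH : Matrix.of hu = G - (1/e) • vecMulVec (G *ᵥ u) (G *ᵥ u) := by
    ext i j; simp [G, hhu, mulVec, dotProduct, vecMulVec_apply, mul_assoc]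
  have hL : (∀ i j, ∑ m, ∑ p, hu i m * ka m p * hu p j = 0) ↔
      Matrix.of hu * Matrix.of ka * Matrix.of hu = 0 := by
    simp only [← Matrix.ext_iff, mul_mul_apply_eq_sum_sum, of_apply, Matrix.zero_apply]
  have hR : (∀ i j, ka i j =
        (1/e) * ∑ m, (∑ p, glow m p * u p) * (u i * ka m j - u j * ka m i)) ↔
      Matrix.of ka = (1/e) • (vecMulVec u ((G *ᵥ u) ᵥ* Matrix.of ka)
        - vecMulVec ((G *ᵥ u) ᵥ* Matrix.of ka) u) := by
    rw [← Matrix.ext_iff]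
    refine forall₂_congr fun i j => ?_
    have hsum : ∑ m, (∑ p, glow m p * u p) * (u i * ka m j - u j * ka m i) = _ :=
      sum_mul_sub_eq_vecMulVec_sub_vecMulVec_apply (Matrix.of ka) u (G *ᵥ u) i j
    rw [hsum]; rfl
  rw [hL, hR, hH]
  exact sub_vecMulVec_mul_mul_sub_vecMulVec_eq_zero_iff hG hGG' hK _ u

/-- Necessary and sufficient condition for vanishing rotation velocity:
h_u(k_a)h_u = 0 iff k_a^{ij} = (1/e)·g_{mn}·u^n·(u^i·k_a^{mj} − u^j·k_a^{mi}). -/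
theorem stmt13 (n : ℕ) (glow ginv : Fin n → Fin n → ℝ) (u : Fin n → ℝ)
    (hsym : ∀ i j, glow i j = glow j i)
    (hinv : ∀ i m, ∑ j, glow i j * ginv j m = if i = m then (1:ℝ) else 0)
    (hinv' : ∀ i m, ∑ j, ginv i j * glow j m = if i = m then (1:ℝ) else 0)
    (e : ℝ) (hedef : e = ∑ i, ∑ j, glow i j * u i * u j) (he : e ≠ 0)
    (ka : Fin n → Fin n → ℝ) (hka : ∀ i j, ka i j = - ka j i)
    (hu : Fin n → Fin n → ℝ)
    (hhu : ∀ i j, hu i j = glow i j -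
        (1/e) * (∑ m, glow i m * u m) * (∑ m, glow j m * u m)) :
    (∀ i j, ∑ m, ∑ p, hu i m * ka m p * hu p j = 0) ↔
    (∀ i j, ka i j =
        (1/e) * ∑ m, (∑ p, glow m p * u p) * (u i * ka m j - u j * ka m i)) :=
  stmt13_general n glow ginv u hsym hinv e ka hka hu hhu
end

section
/- A necessary and sufficient condition for vanishing deformation velocity d = h_u(k)h_u = 0 is k = (1/e)·{a ⊗ u + u ⊗ (g(u))(k)} − (1/e²)·g(u,a)·u ⊗ u, where a := k(g(u)) (i.e. a^i = k^{ij} g_{jm} u^m) and g(u,a) = (g(u))(k)(g(u)). -/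
/-!
With `G` the matrix of `g`, `w = G u` and `P = 1 - (1/e) u wᵀ`, the symmetry of `G` gives `h_u = G P = Pᵀ G`, so
`h_u k h_u = G (P k Pᵀ) G`. As `G` is invertible, `d = 0` exactly when `P k Pᵀ = 0`, and expanding
`P k Pᵀ` yields `k` minus the claimed right-hand side.
-/

open Matrix

namespace Matrix

variable {ι R : Type*} [Fintype ι] [DecidableEq ι] [CommRing R]

theorem sub_smul_vecMulVec_mulVec_eq_mul_one_sub (G : Matrix ι ι R) (u : ι → R) (c : R) :
    G - c • vecMulVec (G *ᵥ u) (G *ᵥ u) = G * (1 - c • vecMulVec u (G *ᵥ u)) := by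
  rw [Matrix.mul_sub, Matrix.mul_one, Matrix.mul_smul, mul_vecMulVec]

theorem IsSymm.sub_smul_vecMulVec_mulVec_eq_one_sub_mul {G : Matrix ι ι R} (hG : G.IsSymm)
    (u : ι → R) (c : R) :
    G - c • vecMulVec (G *ᵥ u) (G *ᵥ u) = (1 - c • vecMulVec (G *ᵥ u) u) * G := by
  rw [Matrix.sub_mul, Matrix.one_mul, Matrix.smul_mul, vecMulVec_mul, ← mulVec_transpose, hG.eq]

theorem one_sub_smul_vecMulVec_mul_mul_one_sub_smul_vecMulVec (K : Matrix ι ι R) (u w : ι → R)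
    (c : R) :
    (1 - c • vecMulVec u w) * K * (1 - c • vecMulVec w u) =
      K - c • (vecMulVec (K *ᵥ w) u + vecMulVec u (w ᵥ* K))
        + (c ^ 2 * (w ⬝ᵥ K *ᵥ w)) • vecMulVec u u := by
  rw [Matrix.sub_mul, Matrix.one_mul, Matrix.smul_mul, vecMulVec_mul, Matrix.mul_sub,
    Matrix.mul_one, Matrix.mul_smul, Matrix.sub_mul, Matrix.smul_mul, mul_vecMulVec,
    vecMulVec_mul_vecMulVec, vecMulVec_smul, ← dotProduct_mulVec]
  module

theorem IsSymm.sub_smul_vecMulVec_mul_mul_eq_zero_iff {G : Matrix ι ι R} (hG : G.IsSymm)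
    (hG' : IsUnit G) (u : ι → R) (c : R) (K : Matrix ι ι R) :
    (G - c • vecMulVec (G *ᵥ u) (G *ᵥ u)) * K * (G - c • vecMulVec (G *ᵥ u) (G *ᵥ u)) = 0 ↔
      K = c • (vecMulVec (K *ᵥ (G *ᵥ u)) u + vecMulVec u ((G *ᵥ u) ᵥ* K))
        - (c ^ 2 * ((G *ᵥ u) ⬝ᵥ K *ᵥ (G *ᵥ u))) • vecMulVec u u := by
  have hfactor :
      (G - c • vecMulVec (G *ᵥ u) (G *ᵥ u)) * K * (G - c • vecMulVec (G *ᵥ u) (G *ᵥ u)) =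
        G * ((1 - c • vecMulVec u (G *ᵥ u)) * K * (1 - c • vecMulVec (G *ᵥ u) u)) * G := by
    nth_rewrite 1 [sub_smul_vecMulVec_mulVec_eq_mul_one_sub]
    rw [hG.sub_smul_vecMulVec_mulVec_eq_one_sub_mul]
    simp only [Matrix.mul_assoc]
  rw [hfactor, hG'.mul_left_eq_zero, hG'.mul_right_eq_zero,
    one_sub_smul_vecMulVec_mul_mul_one_sub_smul_vecMulVec, sub_add, sub_eq_zero]

end Matrix

open Finset

theorem stmt14_general (n : ℕ) (glow ginv : Fin n → Fin n → ℝ) (u : Fin n → ℝ)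
    (hsym : ∀ i j, glow i j = glow j i)
    (hinv : ∀ i m, ∑ j, glow i j * ginv j m = if i = m then (1:ℝ) else 0)
    (e : ℝ)
    (k : Fin n → Fin n → ℝ)
    (hu : Fin n → Fin n → ℝ)
    (hhu : ∀ i j, hu i j = glow i j -
        (1/e) * (∑ m, glow i m * u m) * (∑ m, glow j m * u m)) :
    (∀ i j, ∑ m, ∑ p, hu i m * k m p * hu p j = 0) ↔
    (∀ i j, k i j =
        (1/e) * ((∑ m, k i m * (∑ p, glow m p * u p)) * u j
          + u i * (∑ m, (∑ p, glow m p * u p) * k m j))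
        - (1/e^2) * (∑ m, (∑ p, glow m p * u p) *
            (∑ q, k m q * (∑ p, glow q p * u p))) * (u i * u j)) := by
  let G : Matrix (Fin n) (Fin n) ℝ := Matrix.of glow
  have hG : G.IsSymm := IsSymm.ext fun i j => hsym j i
  have hG' : IsUnit G := IsUnit.of_mul_eq_one (Matrix.of ginv) <| Matrix.ext fun i m => by
    simp [G, mul_apply, hinv, one_apply]
  have hH : Matrix.of hu = G - (1 / e) • vecMulVec (G *ᵥ u) (G *ᵥ u) := Matrix.ext fun i j => by
    simp [G, hhu, vecMulVec_apply, mulVec, dotProduct, mul_assoc]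
  calc (∀ i j, ∑ m, ∑ p, hu i m * k m p * hu p j = 0)
      ↔ Matrix.of hu * Matrix.of k * Matrix.of hu = 0 := by
        rw [← Matrix.ext_iff]
        refine forall₂_congr fun i j => ?_
        simp only [mul_apply, of_apply, sum_mul, Matrix.zero_apply]
        rw [sum_comm]
    _ ↔ _ := hH ▸ hG.sub_smul_vecMulVec_mul_mul_eq_zero_iff hG' u (1 / e) (Matrix.of k)
    _ ↔ _ := by
        rw [← Matrix.ext_iff]
        refine forall₂_congr fun i j => ?_
        simp only [G, Matrix.sub_apply, Matrix.add_apply, Matrix.smul_apply, vecMulVec_apply,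
          mulVec, vecMul, dotProduct, of_apply, smul_eq_mul]
        ring_nf

/-- Necessary and sufficient condition for vanishing deformation velocity:
d = h_u(k)h_u = 0 iff
k^{ij} = (1/e)·(a^i u^j + u^i (g(u))(k)^j) − (1/e²)·g(u,a)·u^i u^j,
where a^i = k^{ij} g_{jm} u^m and g(u,a) = (g(u))(k)(g(u)). -/
theorem stmt14 (n : ℕ) (glow ginv : Fin n → Fin n → ℝ) (u : Fin n → ℝ)
    (hsym : ∀ i j, glow i j = glow j i)
    (hinv : ∀ i m, ∑ j, glow i j * ginv j m = if i = m then (1:ℝ) else 0)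
    (hinv' : ∀ i m, ∑ j, ginv i j * glow j m = if i = m then (1:ℝ) else 0)
    (e : ℝ) (hedef : e = ∑ i, ∑ j, glow i j * u i * u j) (he : e ≠ 0)
    (k : Fin n → Fin n → ℝ)
    (hu : Fin n → Fin n → ℝ)
    (hhu : ∀ i j, hu i j = glow i j -
        (1/e) * (∑ m, glow i m * u m) * (∑ m, glow j m * u m)) :
    (∀ i j, ∑ m, ∑ p, hu i m * k m p * hu p j = 0) ↔
    (∀ i j, k i j =
        (1/e) * ((∑ m, k i m * (∑ p, glow m p * u p)) * u j
          + u i * (∑ m, (∑ p, glow m p * u p) * k m j))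
        - (1/e^2) * (∑ m, (∑ p, glow m p * u p) *
            (∑ q, k m q * (∑ p, glow q p * u p))) * (u i * u j)) :=
  stmt14_general n glow ginv u hsym hinv e k hu hhu
end

section
/- If a vector field u satisfies ∇_ξ u = T(ξ, u) for all vector fields ξ (equivalently £_u ξ = ∇_u ξ for all ξ), then the curvature operator equals the deviation operator on u: [R(u,v)]ξ = [£Γ(u,v)]ξ for all vector fields v, ξ, where [R(u,v)]ξ = ∇_u∇_v ξ − ∇_v∇_u ξ − ∇_{£_u v} ξ and [£Γ(u,v)]ξ = £_u∇_v ξ − ∇_v £_u ξ − ∇_{£_u v} ξ. -/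
/-- Expanding the torsion, `∇_ξ u = T(ξ, u)` reads `∇_u ξ + [ξ, u] = 0`. -/
theorem nabla_eq_lie_of_nabla_eq_torsion {V : Type*} [AddCommGroup V] {nabla lie T : V → V → V}
    (hT : ∀ ξ η, T ξ η = nabla ξ η - nabla η ξ - lie ξ η) (hlie : ∀ ξ η, lie ξ η = - lie η ξ)
    {u : V} (hu : ∀ ξ, nabla ξ u = T ξ u) (ξ : V) : nabla u ξ = lie u ξ := by
  have h := hu ξ
  rw [hT, hlie ξ u, sub_neg_eq_add, sub_add, eq_comm, sub_eq_self, sub_eq_zero] at h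
  exact h

/-- If ∇_ξ u = T(ξ,u) for all ξ (equivalently £_u ξ = ∇_u ξ), then the curvature
operator equals the deviation operator on u: [R(u,v)]ξ = [£Γ(u,v)]ξ. -/
theorem stmt16 (VF : Type*) [AddCommGroup VF]
    (nabla lie T : VF → VF → VF)
    (hT : ∀ ξ η, T ξ η = nabla ξ η - nabla η ξ - lie ξ η)
    (hlie : ∀ ξ η, lie ξ η = - lie η ξ)
    (u : VF) (hu : ∀ ξ, nabla ξ u = T ξ u) :
    ∀ v ξ : VF,
      nabla u (nabla v ξ) - nabla v (nabla u ξ) - nabla (lie u v) ξ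
        = lie u (nabla v ξ) - nabla v (lie u ξ) - nabla (lie u v) ξ := by
  intro v ξ
  simp only [nabla_eq_lie_of_nabla_eq_torsion hT hlie hu]
end
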